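/- arXiv:1204.3314 — 6 statements merged into one kernel-verified Lean document; each statement's English description precedes it below -/
import Mathlib

section
/- Let A, B be 2×2 complex matrices satisfying condition (*) (i.e., the 2×4 matrix (A B) obtained by horizontal concatenation has rank 2, and A J A* = B J B* with J = [[0,-1],[1,0]]). Then rank(A) = rank(B), and this common rank is nonzero. -/
/-!
Taking determinants in `A J Aᴴ = B J Bᴴ` gives `|det A|² = |det B|²` (as `det J = 1`), so `A` and
`B` are singular together. Neither vanishes: if `A = 0`, then `rank B ≥ rank (A B) = 2`, so `B` is
invertible while `A` is singular. A nonzero 2×2 matrix has rank 1 or 2 according as it is singular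
or not, hence `rank A = rank B ≠ 0`.
-/

open Matrix

/-- The matrix `J = [[0,-1],[1,0]]`. -/
def Jmat : Matrix (Fin 2) (Fin 2) ℂ := !![0, -1; 1, 0]

namespace Matrix

variable {m n K : Type*} [Fintype n] [Field K]

theorem rank_eq_zero_iff (M : Matrix m n K) : M.rank = 0 ↔ M = 0 := by
  rw [rank, Submodule.finrank_eq_zero, LinearMap.range_eq_bot, LinearMap.ext_iff, ext_iff_mulVec]
  simp

theorem rank_eq_card_iff_det_ne_zero [DecidableEq n] (M : Matrix n n K) :
    M.rank = Fintype.card n ↔ M.det ≠ 0 := by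
  refine ⟨fun h => ?_, rank_of_det_ne_zero⟩
  have hsurj : Function.Surjective M.mulVec := by
    rw [← coe_mulVecLin, ← LinearMap.range_eq_top]
    exact Submodule.eq_top_of_finrank_eq (by simpa [rank] using h)
  exact ((isUnit_iff_isUnit_det M).mp (mulVec_surjective_iff_isUnit.mp hsurj)).ne_zero

theorem rank_fromCols_le {p : Type*} [Fintype p] (A : Matrix m n K) (B : Matrix m p K) :
    (fromCols A B).rank ≤ A.rank + B.rank := by
  have hrange : LinearMap.range (fromCols A B).mulVecLin ≤
      LinearMap.range A.mulVecLin ⊔ LinearMap.range B.mulVecLin := by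
    rintro _ ⟨v, rfl⟩
    simpa using Submodule.add_mem_sup (LinearMap.mem_range_self A.mulVecLin (v ∘ Sum.inl))
      (LinearMap.mem_range_self B.mulVecLin (v ∘ Sum.inr))
  exact (Submodule.finrank_mono hrange).trans (Submodule.finrank_add_le_finrank_add_finrank _ _)

theorem ne_zero_of_rank_fromCols_eq_card [DecidableEq n] [Nonempty n] {A B : Matrix n n K}
    (hrank : (fromCols A B).rank = Fintype.card n) (hdet : A.det = 0 ↔ B.det = 0) :
    A ≠ 0 ∧ B ≠ 0 := by
  have hle := rank_fromCols_le A B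
  have hfull {M : Matrix n n K} (hM : Fintype.card n ≤ M.rank) : M.det ≠ 0 :=
    (rank_eq_card_iff_det_ne_zero M).mp (le_antisymm (rank_le_card_width M) hM)
  constructor
  · rintro rfl
    exact hfull (by simpa [hrank] using hle) (hdet.mp det_zero)
  · rintro rfl
    exact hfull (by simpa [hrank] using hle) (hdet.mpr det_zero)

theorem rank_eq_one_of_det_eq_zero {M : Matrix (Fin 2) (Fin 2) K} (hM : M ≠ 0)
    (hdet : M.det = 0) : M.rank = 1 := by
  have h0 : M.rank ≠ 0 := (rank_eq_zero_iff M).not.mpr hM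
  have h2 : M.rank ≠ 2 := by simpa [hdet] using (rank_eq_card_iff_det_ne_zero M).not
  have hle : M.rank ≤ 2 := by simpa using rank_le_card_width M
  omega

theorem det_eq_zero_iff_of_mul_mul_conjTranspose_eq {R : Type*} [CommRing R] [IsDomain R]
    [StarRing R] [DecidableEq n] {A B J : Matrix n n R} (hJ : J.det ≠ 0)
    (h : A * J * Aᴴ = B * J * Bᴴ) : A.det = 0 ↔ B.det = 0 := by
  have hsingular (M : Matrix n n R) : M.det = 0 ↔ (M * J * Mᴴ).det = 0 := by
    simp [hJ]
  rw [hsingular A, hsingular B, h]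

end Matrix

/-- Lemma 2.3(i): if `(A B)` has rank 2 and `A J Aᴴ = B J Bᴴ`, then
`rank A = rank B` and this common rank is nonzero. -/
theorem rank_eq_rank_and_ne_zero (A B : Matrix (Fin 2) (Fin 2) ℂ)
    (hrank : (Matrix.fromCols A B).rank = 2)
    (hsym : A * Jmat * Aᴴ = B * Jmat * Bᴴ) :
    A.rank = B.rank ∧ A.rank ≠ 0 := by
  have hdet : A.det = 0 ↔ B.det = 0 :=
    det_eq_zero_iff_of_mul_mul_conjTranspose_eq (by simp [Jmat]) hsym
  obtain ⟨hA, hB⟩ := ne_zero_of_rank_fromCols_eq_card (by simpa using hrank) hdet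
  by_cases hA0 : A.det = 0
  · rw [rank_eq_one_of_det_eq_zero hA hA0, rank_eq_one_of_det_eq_zero hB (hdet.mp hA0)]
    simp
  · rw [rank_of_det_ne_zero hA0, rank_of_det_ne_zero (hdet.not.mp hA0)]
    simp
end

section
/- Let A, B be 2×2 complex matrices satisfying condition (*) (i.e., the 2×4 matrix (A B) obtained by horizontal concatenation has rank 2, and A J A* = B J B* with J = [[0,-1],[1,0]]). Then the intersection of the column spaces of A and B (the ranges of the linear maps x ↦ A x and x ↦ B x on ℂ²) equals {0} if and only if rank(A) = rank(B) = 1. -/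
/-!
The dimension formula for `col A ⊔ col B = col (A B) = ℂ²` gives
`rank A + rank B = 2 + dim (col A ⊓ col B)`, so the intersection is trivial iff the ranks add
up to `2`. The split `0 + 2` is impossible: if `A = 0` then `B J Bᴴ = 0`, and as `J` is
nonsingular the columns of `J Bᴴ` span a space of dimension `rank B` inside `ker B`, so
`2 rank B ≤ 2`.
-/

open Matrix

namespace Matrix

variable {m n n₁ n₂ R : Type*} [Fintype n]

theorem range_mulVecLin_fromCols [CommSemiring R] [Fintype n₁] [Fintype n₂]
    (A : Matrix m n₁ R) (B : Matrix m n₂ R) :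
    LinearMap.range (fromCols A B).mulVecLin =
      LinearMap.range A.mulVecLin ⊔ LinearMap.range B.mulVecLin := by
  refine le_antisymm ?_ (sup_le ?_ ?_)
  · rintro _ ⟨v, rfl⟩
    rw [mulVecLin_apply, fromCols_mulVec]
    exact Submodule.add_mem_sup ⟨_, rfl⟩ ⟨_, rfl⟩
  · rintro _ ⟨v, rfl⟩
    exact ⟨Sum.elim v 0, by simp⟩
  · rintro _ ⟨v, rfl⟩
    exact ⟨Sum.elim 0 v, by simp⟩

theorem rank_add_rank_eq_rank_fromCols_add_finrank_inf [Field R] [Finite m] [Fintype n₁]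
    [Fintype n₂] (A : Matrix m n₁ R) (B : Matrix m n₂ R) :
    A.rank + B.rank = (fromCols A B).rank +
      Module.finrank R ↥(LinearMap.range A.mulVecLin ⊓ LinearMap.range B.mulVecLin) := by
  rw [rank, rank, rank, range_mulVecLin_fromCols, Submodule.finrank_sup_add_finrank_inf_eq]

theorem eq_zero_of_rank_eq_zero [Field R] [Finite m] {M : Matrix m n R} (hM : M.rank = 0) :
    M = 0 := by
  have : M.mulVecLin = 0 := LinearMap.range_eq_bot.mp (Submodule.finrank_eq_zero.mp hM)
  classical
  exact toLin'.injective (by simpa [toLin'_apply'] using this)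

theorem two_mul_rank_le_card_of_mul_mul_conjTranspose_eq_zero [Field R] [PartialOrder R]
    [StarRing R] [StarOrderedRing R] [Fintype m] [DecidableEq n] {M : Matrix m n R}
    {J : Matrix n n R} (hJ : J.det ≠ 0) (hM : M * J * Mᴴ = 0) :
    2 * M.rank ≤ Fintype.card n := by
  have := rank_add_rank_le_card_of_mul_eq_zero (A := M) (B := J * Mᴴ)
    (by rwa [← Matrix.mul_assoc])
  rwa [rank_mul_eq_right_of_det_ne_zero J _ hJ, rank_conjTranspose, ← two_mul] at this

end Matrix

theorem Jmat_det_ne_zero : Jmat.det ≠ 0 := by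
  simp [Jmat, det_fin_two]

open scoped ComplexOrder in
theorem two_mul_rank_le_two_of_rank_eq_zero {A B : Matrix (Fin 2) (Fin 2) ℂ}
    (hsym : A * Jmat * Aᴴ = B * Jmat * Bᴴ) (hA : A.rank = 0) : 2 * B.rank ≤ 2 := by
  rw [eq_zero_of_rank_eq_zero hA, Matrix.zero_mul, Matrix.zero_mul, eq_comm] at hsym
  simpa using two_mul_rank_le_card_of_mul_mul_conjTranspose_eq_zero Jmat_det_ne_zero hsym

/-- Lemma 2.3(ii): under condition (*), the column spaces of `A` and `B`
intersect trivially iff `rank A = rank B = 1`. -/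
theorem colSpace_inter_trivial_iff_rank_one (A B : Matrix (Fin 2) (Fin 2) ℂ)
    (hrank : (Matrix.fromCols A B).rank = 2)
    (hsym : A * Jmat * Aᴴ = B * Jmat * Bᴴ) :
    (LinearMap.range A.mulVecLin ⊓ LinearMap.range B.mulVecLin = ⊥) ↔
      (A.rank = 1 ∧ B.rank = 1) := by
  have hdim := rank_add_rank_eq_rank_fromCols_add_finrank_inf A B
  rw [hrank] at hdim
  have hA := two_mul_rank_le_two_of_rank_eq_zero hsym
  have hB := two_mul_rank_le_two_of_rank_eq_zero hsym.symm
  have hA2 := A.rank_le_width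
  have hB2 := B.rank_le_width
  rw [← Submodule.finrank_eq_zero]
  omega
end

section
/- Let M be a 2×2 complex matrix satisfying M J M* = J, where J = [[0,-1],[1,0]]. Then |det(M)| = 1, and there exist a real number φ and a 2×2 complex matrix F all of whose entries are real with det(F) = 1 such that M = e^{iφ} F. -/
/-!
Every `2×2` matrix satisfies `M J Mᵀ = det M • J`. Comparing with `M J Mᴴ = J` and cancelling
the invertible `M J` gives `Mᵀ = det M • Mᴴ`, i.e. every entry satisfies `m = det M * conj m`,
while taking determinants gives `|det M| = 1`. Writing `det M = u²` with `|u| = 1`, the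
entries of `u⁻¹ M` are fixed by conjugation, hence real, and `det (u⁻¹ M) = u⁻² det M = 1`.
-/

open Matrix

open ComplexConjugate

lemma det_Jmat : Jmat.det = 1 := by
  simp [Jmat, det_fin_two]

lemma mul_Jmat_mul_transpose (M : Matrix (Fin 2) (Fin 2) ℂ) :
    M * Jmat * Mᵀ = M.det • Jmat := by
  ext i j
  fin_cases i <;> fin_cases j <;>
    simp [Jmat, det_fin_two, mul_apply, Fin.sum_univ_two] <;> ring

section Symplectic

variable {M : Matrix (Fin 2) (Fin 2) ℂ}

lemma det_mul_conj_det_of_symplectic (h : M * Jmat * Mᴴ = Jmat) :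
    M.det * conj M.det = 1 := by
  simpa [det_Jmat, det_conjTranspose] using congrArg det h

lemma norm_det_eq_one_of_symplectic (h : M * Jmat * Mᴴ = Jmat) : ‖M.det‖ = 1 := by
  have hsq : ‖M.det‖ ^ 2 = 1 := by
    simpa [sq] using congrArg norm (det_mul_conj_det_of_symplectic h)
  exact (pow_eq_one_iff_of_nonneg (norm_nonneg _) two_ne_zero).mp hsq

lemma transpose_eq_det_smul_conjTranspose_of_symplectic (h : M * Jmat * Mᴴ = Jmat) :
    Mᵀ = M.det • Mᴴ := by
  have hMJ : IsUnit (M * Jmat) := by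
    rw [isUnit_iff_isUnit_det, det_mul, det_Jmat, mul_one]
    exact IsUnit.of_mul_eq_one _ (det_mul_conj_det_of_symplectic h)
  apply hMJ.mul_left_cancel
  rw [mul_Jmat_mul_transpose, mul_smul_comm, h]

lemma apply_eq_det_mul_conj_of_symplectic (h : M * Jmat * Mᴴ = Jmat) (i j : Fin 2) :
    M i j = M.det * conj (M i j) := by
  simpa using congrFun (congrFun (transpose_eq_det_smul_conjTranspose_of_symplectic h) j) i

end Symplectic

lemma Complex.exists_exp_mul_I_sq_eq {z : ℂ} (hz : ‖z‖ = 1) :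
    ∃ φ : ℝ, Complex.exp (φ * Complex.I) ^ 2 = z := by
  refine ⟨z.arg / 2, ?_⟩
  conv_rhs => rw [← Complex.norm_mul_exp_arg_mul_I z, hz]
  rw [← Complex.exp_nat_mul]
  push_cast
  ring_nf

lemma Complex.im_inv_mul_eq_zero_of_eq_sq_mul_conj {u z : ℂ} (hu : ‖u‖ = 1)
    (hz : z = u ^ 2 * conj z) :
    (u⁻¹ * z).im = 0 := by
  have hu0 : u ≠ 0 := norm_ne_zero_iff.mp (hu ▸ one_ne_zero)
  rw [← Complex.conj_eq_iff_im, map_mul, map_inv₀, ← RCLike.inv_eq_conj hu, inv_inv]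
  conv_rhs => rw [hz]
  field_simp

/-- Any complex symplectic `2×2` matrix (`M J Mᴴ = J`) has `|det M| = 1` and is a
unimodular scalar multiple of a real matrix with determinant 1. -/
theorem symplectic_eq_unimodular_smul_SL2R (M : Matrix (Fin 2) (Fin 2) ℂ)
    (h : M * Jmat * Mᴴ = Jmat) :
    ‖M.det‖ = 1 ∧
    ∃ (φ : ℝ) (F : Matrix (Fin 2) (Fin 2) ℂ),
      (∀ i j, (F i j).im = 0) ∧ F.det = 1 ∧
      M = Complex.exp ((φ : ℂ) * Complex.I) • F := by
  have hdet := norm_det_eq_one_of_symplectic h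
  obtain ⟨φ, hφ⟩ := Complex.exists_exp_mul_I_sq_eq hdet
  set u := Complex.exp ((φ : ℂ) * Complex.I)
  have hu : ‖u‖ = 1 := Complex.norm_exp_ofReal_mul_I φ
  have hu0 : u ≠ 0 := Complex.exp_ne_zero _
  refine ⟨hdet, φ, u⁻¹ • M, fun i j => ?_, ?_, ?_⟩
  · exact Complex.im_inv_mul_eq_zero_of_eq_sq_mul_conj hu
      (hφ ▸ apply_eq_det_mul_conj_of_symplectic h i j)
  · rw [det_smul, Fintype.card_fin, ← hφ, inv_pow, inv_mul_cancel₀ (pow_ne_zero 2 hu0)]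
  · rw [smul_smul, mul_inv_cancel₀ hu0, one_smul]
end

section
/- Let A and B be 2×2 complex matrices and define X_D = [[A₁₁, -B₁₁],[A₂₁, -B₂₁]] and X_N = [[A₁₂, B₁₂],[A₂₂, B₂₂]] (subscripts denote (row, column) entries). Then the pair (A,B) satisfies condition (*) (i.e., the 2×4 concatenation (A B) has rank 2 and A J A* = B J B* with J = [[0,-1],[1,0]]) if and only if the pair (X_D, X_N) is admissible (i.e., the 2×4 concatenation (X_D X_N) has rank 2 and X_D X_N* = X_N X_D*). -/
open Matrix

/-- The matrix `X_D` built from `A` and `B`. -/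
def XD (A B : Matrix (Fin 2) (Fin 2) ℂ) : Matrix (Fin 2) (Fin 2) ℂ :=
  !![A 0 0, -B 0 0; A 1 0, -B 1 0]

/-- The matrix `X_N` built from `A` and `B`. -/
def XN (A B : Matrix (Fin 2) (Fin 2) ℂ) : Matrix (Fin 2) (Fin 2) ℂ :=
  !![A 0 1, B 0 1; A 1 1, B 1 1]

/-!
Write `M = (A B)`. The columns of `(X_D X_N)` are those of `M` permuted and partly negated, so
`(X_D X_N) = M P` with `P` invertible, and the ranks agree. Both remaining conditions are the
vanishing of a Hermitian form in `M`: `B J B* - A J A* = M diag(-J, J) M*`, and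
`D N* - N D* = (D N) Ω (D N)*` with `Ω = [[0, I], [-I, 0]]`. Since `P Ω P* = diag(-J, J)`,
the two forms coincide.
-/

section BlockForms

variable {R m n₁ n₂ : Type*} [Ring R] [StarRing R] [Fintype n₁] [Fintype n₂]

lemma fromCols_mul_fromBlocks_mul_conjTranspose_fromCols {p k₁ k₂ : Type*}
    [Fintype k₁] [Fintype k₂]
    (A : Matrix m n₁ R) (B : Matrix m n₂ R) (C : Matrix p k₁ R) (D : Matrix p k₂ R)
    (P : Matrix n₁ k₁ R) (Q : Matrix n₁ k₂ R) (S : Matrix n₂ k₁ R) (T : Matrix n₂ k₂ R) :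
    fromCols A B * fromBlocks P Q S T * (fromCols C D)ᴴ =
      A * P * Cᴴ + B * S * Cᴴ + (A * Q * Dᴴ + B * T * Dᴴ) := by
  simp [fromCols_mul_fromBlocks, conjTranspose_fromCols_eq_fromRows_conjTranspose,
    fromCols_mul_fromRows, Matrix.add_mul]

lemma mul_conjTranspose_sub_eq_fromCols_mul_fromBlocks [DecidableEq n₁] (D N : Matrix m n₁ R) :
    D * Nᴴ - N * Dᴴ =
      fromCols D N * (fromBlocks 0 1 (-1) 0 : Matrix (n₁ ⊕ n₁) (n₁ ⊕ n₁) R) * (fromCols D N)ᴴ := by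
  simp [fromCols_mul_fromBlocks_mul_conjTranspose_fromCols, sub_eq_neg_add]

lemma mul_mul_conjTranspose_sub_eq_fromCols_mul_fromBlocks (A : Matrix m n₁ R)
    (B : Matrix m n₂ R) (J₁ : Matrix n₁ n₁ R) (J₂ : Matrix n₂ n₂ R) :
    B * J₂ * Bᴴ - A * J₁ * Aᴴ = fromCols A B * fromBlocks (-J₁) 0 0 J₂ * (fromCols A B)ᴴ := by
  simp [fromCols_mul_fromBlocks_mul_conjTranspose_fromCols, sub_eq_neg_add]

end BlockForms

/-- Sends the columns `a₁, a₂, b₁, b₂` of `(A B)` to `a₁, -b₁, a₂, b₂`. -/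
def columnChange : Matrix (Fin 2 ⊕ Fin 2) (Fin 2 ⊕ Fin 2) ℂ :=
  fromBlocks !![1, 0; 0, 0] !![0, 0; 1, 0] !![0, -1; 0, 0] !![0, 0; 0, 1]

lemma columnChange_mul_conjTranspose : columnChange * columnChangeᴴ = 1 := by
  rw [columnChange, fromBlocks_conjTranspose, fromBlocks_multiply, ← fromBlocks_one]
  congr 1 <;> ext i j <;> fin_cases i <;> fin_cases j <;>
    simp [vecMul, dotProduct, Fin.sum_univ_two]

lemma columnChange_mul_fromBlocks_mul_conjTranspose :
    columnChange * fromBlocks 0 1 (-1) 0 * columnChangeᴴ = fromBlocks (-Jmat) 0 0 Jmat := by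
  rw [columnChange, fromBlocks_conjTranspose, fromBlocks_multiply, fromBlocks_multiply]
  congr 1 <;> ext i j <;> fin_cases i <;> fin_cases j <;>
    simp [Jmat, vecMul, dotProduct, Fin.sum_univ_two]

lemma fromCols_XD_XN (A B : Matrix (Fin 2) (Fin 2) ℂ) :
    fromCols (XD A B) (XN A B) = fromCols A B * columnChange := by
  rw [columnChange, fromCols_mul_fromBlocks]
  congr 1 <;> ext i j <;> fin_cases i <;> fin_cases j <;> simp [XD, XN, Matrix.mul_apply]

lemma rank_fromCols_XD_XN (A B : Matrix (Fin 2) (Fin 2) ℂ) :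
    (fromCols (XD A B) (XN A B)).rank = (fromCols A B).rank := by
  rw [fromCols_XD_XN, rank_mul_eq_left_of_isUnit_det _ _
    (isUnit_det_of_right_inverse columnChange_mul_conjTranspose)]

lemma XD_mul_conjTranspose_XN_sub (A B : Matrix (Fin 2) (Fin 2) ℂ) :
    XD A B * (XN A B)ᴴ - XN A B * (XD A B)ᴴ = B * Jmat * Bᴴ - A * Jmat * Aᴴ := by
  rw [mul_conjTranspose_sub_eq_fromCols_mul_fromBlocks, fromCols_XD_XN, conjTranspose_mul,
    mul_mul_conjTranspose_sub_eq_fromCols_mul_fromBlocks,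
    ← columnChange_mul_fromBlocks_mul_conjTranspose]
  simp only [Matrix.mul_assoc]

/-- Lemma 2.5: `(A,B)` satisfies (*) iff `(X_D, X_N)` is admissible. -/
theorem condition_star_iff_admissible (A B : Matrix (Fin 2) (Fin 2) ℂ) :
    ((Matrix.fromCols A B).rank = 2 ∧ A * Jmat * Aᴴ = B * Jmat * Bᴴ) ↔
    ((Matrix.fromCols (XD A B) (XN A B)).rank = 2 ∧
      XD A B * (XN A B)ᴴ = XN A B * (XD A B)ᴴ) := by
  rw [rank_fromCols_XD_XN, ← sub_eq_zero (a := XD A B * _), XD_mul_conjTranspose_XN_sub,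
    sub_eq_zero, eq_comm (a := B * Jmat * Bᴴ)]
end

section
/- Let (D, N) be an admissible pair of 2×2 complex matrices with G = D D* + N N* and complementary pair D⊥ = -G^{-1} N, N⊥ = G^{-1} D, and let (D', N') be another admissible pair. Define T = D' (N⊥)* - N' (D⊥)* and S = N' D* - D' N*. Then D' = T D + S D⊥ and N' = T N + S N⊥. -/
/-!
The Gram matrix `G = D Dᴴ + N Nᴴ` of the full-rank block `(D N)` is invertible. Because `D Nᴴ`
is Hermitian, both `W = D + iN` and `W = D - iN` satisfy `W Wᴴ = G`, hence `Wᴴ G⁻¹ W = 1`.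
Adding and subtracting the two equations gives `Dᴴ G⁻¹ D + Nᴴ G⁻¹ N = 1` and
`Dᴴ G⁻¹ N = Nᴴ G⁻¹ D`, and the decomposition of `(D', N')` is a direct expansion of these.
-/

open Matrix

namespace Matrix

variable {n : Type*} [Fintype n]

theorem fromCols_mul_conjTranspose_fromCols {m R : Type*} [Semiring R] [StarRing R]
    (D N : Matrix m n R) : fromCols D N * (fromCols D N)ᴴ = D * Dᴴ + N * Nᴴ := by
  rw [conjTranspose_fromCols_eq_fromRows_conjTranspose, fromCols_mul_fromRows]

variable [DecidableEq n]

theorem isUnit_of_rank_eq_card {K : Type*} [Field K] {A : Matrix n n K}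
    (h : A.rank = Fintype.card n) : IsUnit A := by
  rw [← mulVec_surjective_iff_isUnit, ← coe_mulVecLin, ← LinearMap.range_eq_top]
  apply Submodule.eq_top_of_finrank_eq
  rw [Module.finrank_fintype_fun_eq_card]
  exact h

theorem mul_inv_mul_eq_one_of_mul_eq {R : Type*} [CommRing R] {A B G : Matrix n n R}
    (hG : IsUnit G.det) (h : A * B = G) : B * G⁻¹ * A = 1 :=
  mul_eq_one_comm.mp (by rw [← Matrix.mul_assoc, h, mul_nonsing_inv G hG])

variable {D N : Matrix n n ℂ}

theorem isUnit_det_gram_of_rank_fromCols (hrank : (fromCols D N).rank = Fintype.card n) :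
    IsUnit (D * Dᴴ + N * Nᴴ).det := by
  open scoped ComplexOrder in
  rw [← isUnit_iff_isUnit_det, ← fromCols_mul_conjTranspose_fromCols]
  apply isUnit_of_rank_eq_card
  rw [rank_self_mul_conjTranspose, hrank]

theorem add_smul_mul_conjTranspose {c : ℂ} (hc : star c = -c) (hcc : c * c = -1)
    (hsym : D * Nᴴ = N * Dᴴ) :
    (D + c • N) * (D + c • N)ᴴ = D * Dᴴ + N * Nᴴ := by
  simp only [conjTranspose_add, conjTranspose_smul, hc, add_mul, mul_add, smul_mul_assoc,
    mul_smul_comm, hsym]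
  match_scalars <;> grind

theorem conjTranspose_mul_gram_inv_mul (hrank : (fromCols D N).rank = Fintype.card n)
    (hsym : D * Nᴴ = N * Dᴴ) :
    Dᴴ * (D * Dᴴ + N * Nᴴ)⁻¹ * D + Nᴴ * (D * Dᴴ + N * Nᴴ)⁻¹ * N = 1 ∧
      Dᴴ * (D * Dᴴ + N * Nᴴ)⁻¹ * N = Nᴴ * (D * Dᴴ + N * Nᴴ)⁻¹ * D := by
  have key : ∀ c : ℂ, star c = -c → c * c = -1 →
      Dᴴ * (D * Dᴴ + N * Nᴴ)⁻¹ * D + Nᴴ * (D * Dᴴ + N * Nᴴ)⁻¹ * N +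
        c • (Dᴴ * (D * Dᴴ + N * Nᴴ)⁻¹ * N - Nᴴ * (D * Dᴴ + N * Nᴴ)⁻¹ * D) = 1 := by
    intro c hc hcc
    rw [← mul_inv_mul_eq_one_of_mul_eq (isUnit_det_gram_of_rank_fromCols hrank)
      (add_smul_mul_conjTranspose hc hcc hsym)]
    simp only [conjTranspose_add, conjTranspose_smul, hc, add_mul, mul_add, smul_mul_assoc,
      mul_smul_comm, Matrix.mul_assoc]
    match_scalars <;> grind
  have hI := key Complex.I (by simp) (by simp)
  have hnI := key (-Complex.I) (by simp) (by simp)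
  set X := Dᴴ * (D * Dᴴ + N * Nᴴ)⁻¹ * N - Nᴴ * (D * Dᴴ + N * Nᴴ)⁻¹ * D
  have hX : X = 0 := by
    have h2I : (2 * Complex.I) • X = 0 := by linear_combination (norm := module) hI - hnI
    exact (smul_eq_zero.mp h2I).resolve_left (by simp)
  exact ⟨by simpa [hX] using hI, sub_eq_zero.mp hX⟩

end Matrix

theorem trace_map_decomposition_general (D N D' N' G Dp Np T S : Matrix (Fin 2) (Fin 2) ℂ)
    (hrank : (Matrix.fromCols D N).rank = 2)
    (hsym : D * Nᴴ = N * Dᴴ)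
    (hG : G = D * Dᴴ + N * Nᴴ)
    (hDp : Dp = -(G⁻¹ * N))
    (hNp : Np = G⁻¹ * D)
    (hT : T = D' * Npᴴ - N' * Dpᴴ)
    (hS : S = N' * Dᴴ - D' * Nᴴ) :
    D' = T * D + S * Dp ∧ N' = T * N + S * Np := by
  obtain ⟨hsum, hcomm⟩ := conjTranspose_mul_gram_inv_mul hrank hsym
  rw [← hG] at hsum hcomm
  have hGinv : G⁻¹ᴴ = G⁻¹ := by
    rw [hG]
    exact ((isHermitian_mul_conjTranspose_self D).add (isHermitian_mul_conjTranspose_self N)).inv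
  subst hT hS hDp hNp
  simp only [conjTranspose_mul, conjTranspose_neg, hGinv]
  constructor
  · calc D' = D' * (Dᴴ * G⁻¹ * D + Nᴴ * G⁻¹ * N) + N' * (Nᴴ * G⁻¹ * D - Dᴴ * G⁻¹ * N) := by
          rw [hsum, hcomm, sub_self, Matrix.mul_zero, add_zero, Matrix.mul_one]
      _ = _ := by noncomm_ring
  · calc N' = N' * (Dᴴ * G⁻¹ * D + Nᴴ * G⁻¹ * N) - D' * (Nᴴ * G⁻¹ * D - Dᴴ * G⁻¹ * N) := by
          rw [hsum, hcomm, sub_self, Matrix.mul_zero, sub_zero, Matrix.mul_one]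
      _ = _ := by noncomm_ring

/-- Matrix form of identities (4.15)–(4.16): any admissible pair `(D',N')` can be
expressed through `(D,N)` and its complementary pair via
`T = D'(N⊥)ᴴ - N'(D⊥)ᴴ` and `S = N'Dᴴ - D'Nᴴ`. -/
theorem trace_map_decomposition (D N D' N' G Dp Np T S : Matrix (Fin 2) (Fin 2) ℂ)
    (hrank : (Matrix.fromCols D N).rank = 2)
    (hsym : D * Nᴴ = N * Dᴴ)
    (hrank' : (Matrix.fromCols D' N').rank = 2)
    (hsym' : D' * N'ᴴ = N' * D'ᴴ)
    (hG : G = D * Dᴴ + N * Nᴴ)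
    (hDp : Dp = -(G⁻¹ * N))
    (hNp : Np = G⁻¹ * D)
    (hT : T = D' * Npᴴ - N' * Dpᴴ)
    (hS : S = N' * Dᴴ - D' * Nᴴ) :
    D' = T * D + S * Dp ∧ N' = T * N + S * Np :=
  trace_map_decomposition_general D N D' N' G Dp Np T S hrank hsym hG hDp hNp hT hS
end

section
/- Let D, N, D', N' be 2×2 complex matrices with D'(N')* = N'(D')* and N' invertible, and let M be a 2×2 complex matrix such that D + N M is invertible. Set S = N' D* - D' N*. Then I₂ - ((N')^{-1} S)* (D + N M)^{-1} = N (N')^{-1} (D' + N' M)(D + N M)^{-1}. -/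
open Matrix

/-- Matrix identity (5.19)–(5.20): with `S = N'Dᴴ - D'Nᴴ`, `N'` invertible,
`D'N'ᴴ = N'D'ᴴ`, and `D + NM` invertible, one has
`I - ((N')⁻¹ S)ᴴ (D + NM)⁻¹ = N (N')⁻¹ (D' + N'M)(D + NM)⁻¹`. -/
theorem perturbation_determinant_reduction
    (D N D' N' M S : Matrix (Fin 2) (Fin 2) ℂ)
    (hsym' : D' * N'ᴴ = N' * D'ᴴ)
    (hN' : IsUnit N')
    (hDNM : IsUnit (D + N * M))
    (hS : S = N' * Dᴴ - D' * Nᴴ) :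
    (1 : Matrix (Fin 2) (Fin 2) ℂ) - (N'⁻¹ * S)ᴴ * (D + N * M)⁻¹
      = N * N'⁻¹ * (D' + N' * M) * (D + N * M)⁻¹ := by
  have hdet : IsUnit (D + N * M).det := (Matrix.isUnit_iff_isUnit_det _).mp hDNM
  have hdetN' : IsUnit N'.det := (Matrix.isUnit_iff_isUnit_det _).mp hN'
  have hdetN'H : IsUnit N'ᴴ.det := by rw [Matrix.det_conjTranspose]; exact hdetN'.star
  have hc : (D + N * M) * (D + N * M)⁻¹ = 1 := Matrix.mul_nonsing_inv _ hdet
  have hcN' : N'⁻¹ * N' = 1 := Matrix.nonsing_inv_mul _ hdetN'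
  have hcN'H : N'ᴴ * N'ᴴ⁻¹ = 1 := Matrix.mul_nonsing_inv _ hdetN'H
  have key : D'ᴴ * N'ᴴ⁻¹ = N'⁻¹ * D' := by
    calc D'ᴴ * N'ᴴ⁻¹ = N'⁻¹ * N' * D'ᴴ * N'ᴴ⁻¹ := by rw [hcN', Matrix.one_mul]
      _ = N'⁻¹ * (D' * N'ᴴ) * N'ᴴ⁻¹ := by rw [Matrix.mul_assoc N'⁻¹ N' D'ᴴ, hsym']
      _ = N'⁻¹ * D' * (N'ᴴ * N'ᴴ⁻¹) := by simp [Matrix.mul_assoc]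
      _ = N'⁻¹ * D' := by rw [hcN'H, Matrix.mul_one]
  have hSH : (N'⁻¹ * S)ᴴ = D - N * (N'⁻¹ * D') := by
    rw [hS, conjTranspose_mul, Matrix.conjTranspose_nonsing_inv]
    rw [conjTranspose_sub, conjTranspose_mul, conjTranspose_mul,
      conjTranspose_conjTranspose, conjTranspose_conjTranspose]
    rw [sub_mul, Matrix.mul_assoc D, hcN'H, Matrix.mul_one,
      Matrix.mul_assoc N, key]
  have h : (D + N * M) - (N'⁻¹ * S)ᴴ = N * N'⁻¹ * (D' + N' * M) := by
    have hNM : N * N'⁻¹ * (N' * M) = N * M := by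
      rw [← Matrix.mul_assoc, Matrix.mul_assoc N, hcN', Matrix.mul_one]
    rw [hSH, Matrix.mul_add, hNM]
    noncomm_ring
  calc (1 : Matrix (Fin 2) (Fin 2) ℂ) - (N'⁻¹ * S)ᴴ * (D + N * M)⁻¹
      = ((D + N * M) - (N'⁻¹ * S)ᴴ) * (D + N * M)⁻¹ := by rw [sub_mul, hc]
    _ = N * N'⁻¹ * (D' + N' * M) * (D + N * M)⁻¹ := by rw [h]
end
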